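/- Let G be a finite group, N a normal subgroup of G, θ an irreducible complex character of N with stabilizer G_θ, and P a projective representation of G_θ associated with θ with factor set α. Let σ be a ring automorphism of ℂ and g ∈ G with θ^{gσ} = θ, and write g = t·x with t ∈ G_θ and x ∈ G. Then θ^{xσ} = θ, conjugation by x maps G_θ onto itself, and if μ_{gσ}, μ_{xσ} : G_θ → ℂ∖{0} are the unique functions with value 1 at the identity and constant on cosets of N for which there exist invertible matrices M and M' with σ(P(g·y·g⁻¹)) = μ_{gσ}(y)·M⁻¹·P(y)·M and σ(P(x·y·x⁻¹)) = μ_{xσ}(y)·M'⁻¹·P(y)·M' for all y ∈ G_θ, then μ_{gσ}(y) = σ(μ_t(x·y·x⁻¹))·μ_{xσ}(y) for all y ∈ G_θ, where μ_t(z) = α(t,t⁻¹)·α(t, z·t⁻¹)⁻¹·α(z, t⁻¹)⁻¹. -/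

import Mathlib

/-!
Put `z = x y x⁻¹`, so that `g y g⁻¹ = t z t⁻¹`. Inside the projective representation, conjugation
by `t` gives `P (t z t⁻¹) = μ_t(z) • P t * P z * (P t)⁻¹`; applying `σ` and the defining relation
of `μ_{xσ}` at `z` writes `σ (P (g y g⁻¹))` a second time in the shape `ν(y) • Q⁻¹ * P y * Q`, with
`ν(y) = σ(μ_t(z)) μ_{xσ}(y)`. Both `μ_{gσ}` and `ν` are `1` on `N` (the factor set is trivial
there), so `M Q⁻¹` commutes with the irreducible representation `P|_N`; by Schur's lemma it is a
scalar, which forces `μ_{gσ} = ν`. For the first two claims, `θ^t = θ` gives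
`θ^{xσ} = θ^{gσ} = θ`, so `θ^x = σ⁻¹ ∘ θ` and conjugation by `x` preserves `G_θ`.
-/

/-- The stabilizer `G_θ` of `θ` in `G`. -/
def charStabSet {G : Type*} [Group G] (N : Subgroup G) (hN : N.Normal) (θ : ↥N → ℂ) : Set G :=
  {x : G | ∀ n : ↥N, θ ⟨x * (n : G) * x⁻¹, hN.conj_mem (n : G) n.2 x⟩ = θ n}

section CharConj

variable {G : Type*} [Group G] {N : Subgroup G} (hN : N.Normal) {β : Type*}

/-- The conjugate `θ^x` of the paper. -/
def charConj (x : G) (θ : N → β) : N → β :=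
  fun n => θ ⟨x * n * x⁻¹, hN.conj_mem n n.2 x⟩

theorem charConj_one (θ : N → β) : charConj hN 1 θ = θ := by
  funext n
  simp [charConj]

theorem charConj_mul (x y : G) (θ : N → β) :
    charConj hN (x * y) θ = charConj hN y (charConj hN x θ) := by
  funext n
  simp only [charConj, mul_inv_rev, mul_assoc]

theorem charConj_comp {γ : Type*} (f : β → γ) (x : G) (θ : N → β) :
    charConj hN x (f ∘ θ) = f ∘ charConj hN x θ :=
  rfl

theorem charConj_injective (x : G) : Function.Injective (charConj hN x : (N → β) → N → β) :=
  fun θ θ' h => by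
    simpa only [← charConj_mul, mul_inv_cancel, charConj_one] using congrArg (charConj hN x⁻¹) h

theorem mem_charStabSet_iff {θ : N → ℂ} {x : G} :
    x ∈ charStabSet N hN θ ↔ charConj hN x θ = θ :=
  funext_iff.symm

def charStab (θ : N → ℂ) : Subgroup G where
  carrier := charStabSet N hN θ
  one_mem' := (mem_charStabSet_iff hN).2 (charConj_one hN θ)
  mul_mem' {x y} hx hy := by
    rw [mem_charStabSet_iff] at *
    rw [charConj_mul, hx, hy]
  inv_mem' {x} hx := by
    rw [mem_charStabSet_iff] at *
    apply charConj_injective hN x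
    rw [← charConj_mul, inv_mul_cancel, charConj_one, hx]

theorem mem_charStab_iff {θ : N → ℂ} {x : G} : x ∈ charStab hN θ ↔ charConj hN x θ = θ :=
  mem_charStabSet_iff hN

theorem le_charStab {θ : N → ℂ} (hθ : ∀ n m : N, θ (n * m * n⁻¹) = θ m) : N ≤ charStab hN θ :=
  fun n hn m => hθ ⟨n, hn⟩ m

theorem charConj_mul_left_of_mem {θ : N → ℂ} {t : G} (ht : t ∈ charStab hN θ) (x : G) :
    charConj hN (t * x) θ = charConj hN x θ := by
  rw [charConj_mul, (mem_charStab_iff hN).1 ht]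

theorem conj_mem_charStab_iff {θ : N → ℂ} {f : ℂ → ℂ} (hf : Function.Injective f) {x : G}
    (hx : f ∘ charConj hN x θ = θ) (y : G) :
    x * y * x⁻¹ ∈ charStab hN θ ↔ y ∈ charStab hN θ := by
  have key : f ∘ charConj hN x (charConj hN (x * y * x⁻¹) θ) = charConj hN y θ := by
    rw [← charConj_mul, inv_mul_cancel_right, charConj_mul, ← charConj_comp, hx]
  rw [mem_charStab_iff, mem_charStab_iff]
  constructor
  · intro h
    rw [← key, h, hx]
  · intro h
    apply charConj_injective hN x
    apply hf.comp_left
    exact key.trans (h.trans hx.symm)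

end CharConj

theorem MonoidHom.trace_map_conj {N R ι : Type*} [Group N] [CommRing R] [Fintype ι]
    [DecidableEq ι] (ρ : N →* Matrix ι ι R) (n m : N) : (ρ (n * m * n⁻¹)).trace = (ρ m).trace := by
  rw [map_mul, map_mul, ← ρ.coe_toHomUnits n, ← ρ.coe_toHomUnits n⁻¹, map_inv,
    Matrix.trace_units_conj]

namespace Matrix

variable {ι : Type*} [Fintype ι] [DecidableEq ι]

theorem map_nonsing_inv {R S F : Type*} [CommRing R] [CommRing S] [FunLike F R S]
    [RingHomClass F R S] (f : F) {A : Matrix ι ι R} (hA : IsUnit A) :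
    A⁻¹.map f = (A.map f)⁻¹ := by
  refine (inv_eq_right_inv ?_).symm
  rw [← Matrix.map_mul, mul_nonsing_inv _ ((isUnit_iff_isUnit_det A).1 hA),
    Matrix.map_one f (map_zero f) (map_one f)]

theorem exists_eq_smul_one_of_forall_commute {K κ : Type*} [Field K] [IsAlgClosed K]
    [Nonempty ι] {A : κ → Matrix ι ι K}
    (hA : ∀ W : Submodule K (ι → K), (∀ i, ∀ v ∈ W, A i *ᵥ v ∈ W) → W = ⊥ ∨ W = ⊤)
    {R : Matrix ι ι K} (hR : ∀ i, Commute (A i) R) : ∃ c : K, R = c • 1 := by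
  obtain ⟨c, hc⟩ := Module.End.exists_eigenvalue (toLin' R)
  have hinv : ∀ i, ∀ v ∈ Module.End.eigenspace (toLin' R) c,
      A i *ᵥ v ∈ Module.End.eigenspace (toLin' R) c := by
    intro i v hv
    rw [Module.End.mem_eigenspace_iff, toLin'_apply] at hv ⊢
    rw [mulVec_mulVec, ← (hR i).eq, ← mulVec_mulVec, hv, mulVec_smul]
  have htop := (hA _ hinv).resolve_left hc
  refine ⟨c, toLin'.injective (LinearMap.ext fun v => ?_)⟩
  have hv : v ∈ Module.End.eigenspace (toLin' R) c := htop ▸ Submodule.mem_top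
  rw [Module.End.mem_eigenspace_iff] at hv
  rw [hv, toLin'_apply, smul_mulVec, one_mulVec]

end Matrix

section ProjectiveRep

variable {G K ι : Type*} [Group G] [Field K] [Fintype ι] [DecidableEq ι]

structure IsProjRep (S : Subgroup G) (P : G → Matrix ι ι K) (α : G → G → K) : Prop where
  isUnit : ∀ x ∈ S, IsUnit (P x)
  factor_ne_zero : ∀ x ∈ S, ∀ y ∈ S, α x y ≠ 0
  mul_eq : ∀ x ∈ S, ∀ y ∈ S, P x * P y = α x y • P (x * y)

/-- The scalar `μ_t(z)` of the paper, see `IsProjRep.map_conj`. -/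
def conjFactor (α : G → G → K) (t z : G) : K :=
  α t t⁻¹ * (α t (z * t⁻¹))⁻¹ * (α z t⁻¹)⁻¹

namespace IsProjRep

variable {S : Subgroup G} {P : G → Matrix ι ι K} {α : G → G → K}

theorem map_conj (hP : IsProjRep S P α) (hP1 : P 1 = 1) {t z : G} (ht : t ∈ S) (hz : z ∈ S) :
    P (t * z * t⁻¹) = conjFactor α t z • (P t * P z * (P t)⁻¹) := by
  have ht' := S.inv_mem ht
  have htt := hP.factor_ne_zero t ht t⁻¹ ht'
  have hinv : (P t)⁻¹ = (α t t⁻¹)⁻¹ • P t⁻¹ := by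
    refine Matrix.inv_eq_right_inv ?_
    rw [Matrix.mul_smul, hP.mul_eq t ht t⁻¹ ht', mul_inv_cancel, hP1, smul_smul,
      inv_mul_cancel₀ htt, one_smul]
  rw [hinv, Matrix.mul_smul, mul_assoc (P t), hP.mul_eq z hz t⁻¹ ht', Matrix.mul_smul,
    hP.mul_eq t ht _ (S.mul_mem hz ht'), smul_smul, smul_smul, smul_smul, ← mul_assoc]
  conv_lhs => rw [← one_smul K (P _)]
  congr 1
  have hα₁ := hP.factor_ne_zero t ht _ (S.mul_mem hz ht')
  have hα₂ := hP.factor_ne_zero z hz t⁻¹ ht'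
  simp only [conjFactor]
  field_simp

theorem map_conj_eq_smul_conj {L F : Type*} [Field L] [FunLike F K L] [RingHomClass F K L]
    (hP : IsProjRep S P α) (hP1 : P 1 = 1) (f : F) {t z : G} (ht : t ∈ S) (hz : z ∈ S) {c : L}
    {B M : Matrix ι ι L} (h : (P z).map f = c • (M⁻¹ * B * M)) :
    (P (t * z * t⁻¹)).map f =
      (f (conjFactor α t z) * c) • ((M * ((P t).map f)⁻¹)⁻¹ * B * (M * ((P t).map f)⁻¹)) := by
  have hT : IsUnit ((P t).map f) := (hP.isUnit t ht).map (f : K →+* L).mapMatrix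
  rw [hP.map_conj hP1 ht hz, Matrix.map_smul' _ _ _ (map_mul f), Matrix.map_mul, Matrix.map_mul,
    Matrix.map_nonsing_inv f (hP.isUnit t ht), h, Matrix.mul_inv_rev,
    Matrix.nonsing_inv_nonsing_inv _ ((Matrix.isUnit_iff_isUnit_det _).1 hT), Matrix.mul_smul,
    Matrix.smul_mul, smul_smul]
  simp only [mul_assoc]

variable [Nonempty ι] {N : Subgroup G}

theorem factor_eq_one_of_mem_left (hP : IsProjRep S P α) (hNS : N ≤ S)
    (hleft : ∀ n : N, ∀ y ∈ S, P (n * y) = P n * P y) {m y : G} (hm : m ∈ N) (hy : y ∈ S) :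
    α m y = 1 := by
  have h := hP.mul_eq m (hNS hm) y hy
  rw [← hleft ⟨m, hm⟩ y hy] at h
  exact smul_left_injective K (hP.isUnit _ (S.mul_mem (hNS hm) hy)).ne_zero
    (h.symm.trans (one_smul K _).symm)

theorem factor_mul_left_of_mem (hP : IsProjRep S P α) (hN : N.Normal) (hNS : N ≤ S)
    (hleft : ∀ n : N, ∀ y ∈ S, P (n * y) = P n * P y)
    (hright : ∀ n : N, ∀ y ∈ S, P (y * n) = P y * P n) {t m y : G} (ht : t ∈ S) (hm : m ∈ N)
    (hy : y ∈ S) : α t (m * y) = α t y := by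
  set m' : N := ⟨t * m * t⁻¹, hN.conj_mem m hm t⟩
  have hmy := S.mul_mem (hNS hm) hy
  have h : α t (m * y) • P (t * (m * y)) = α t y • P (t * (m * y)) := calc
    α t (m * y) • P (t * (m * y)) = P t * P (m * y) := (hP.mul_eq t ht _ hmy).symm
    _ = P (t * m) * P y := by rw [hleft ⟨m, hm⟩ y hy, hright ⟨m, hm⟩ t ht, mul_assoc]
    _ = P m' * (P t * P y) := by
      rw [← mul_assoc, ← hleft m' t ht]
      simp only [m', inv_mul_cancel_right]
    _ = α t y • P (t * (m * y)) := by
      rw [hP.mul_eq t ht y hy, Matrix.mul_smul, ← hleft m' _ (S.mul_mem ht hy)]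
      simp only [m', mul_assoc, inv_mul_cancel_left]
  exact smul_left_injective K (hP.isUnit _ (S.mul_mem ht hmy)).ne_zero h

theorem conjFactor_eq_one_of_mem (hP : IsProjRep S P α) (hN : N.Normal) (hNS : N ≤ S)
    (hleft : ∀ n : N, ∀ y ∈ S, P (n * y) = P n * P y)
    (hright : ∀ n : N, ∀ y ∈ S, P (y * n) = P y * P n) {t m : G} (ht : t ∈ S) (hm : m ∈ N) :
    conjFactor α t m = 1 := by
  rw [conjFactor, hP.factor_mul_left_of_mem hN hNS hleft hright ht hm (S.inv_mem ht),
    hP.factor_eq_one_of_mem_left hNS hleft hm (S.inv_mem ht), inv_one, mul_one,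
    mul_inv_cancel₀ (hP.factor_ne_zero t ht t⁻¹ (S.inv_mem ht))]

theorem eq_of_smul_conj_eq [IsAlgClosed K] (hP : IsProjRep S P α) (hNS : N ≤ S)
    (hirr : ∀ W : Submodule K (ι → K), (∀ n : N, ∀ v ∈ W, (P n).mulVec v ∈ W) → W = ⊥ ∨ W = ⊤)
    {μ ν : G → K} (hμ : ∀ n ∈ N, μ n = 1) (hν : ∀ n ∈ N, ν n = 1) {M Q : Matrix ι ι K}
    (hM : IsUnit M) (hQ : IsUnit Q)
    (h : ∀ y ∈ S, μ y • (M⁻¹ * P y * M) = ν y • (Q⁻¹ * P y * Q)) {y : G} (hy : y ∈ S) :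
    μ y = ν y := by
  have hMdet := (Matrix.isUnit_iff_isUnit_det M).1 hM
  have hQdet := (Matrix.isUnit_iff_isUnit_det Q).1 hQ
  have hR : ∀ y ∈ S, μ y • (P y * (M * Q⁻¹)) = ν y • (M * Q⁻¹ * P y) := by
    intro y hy
    simpa only [Matrix.mul_smul, Matrix.smul_mul, mul_assoc,
      Matrix.mul_nonsing_inv_cancel_left _ _ hMdet, Matrix.mul_nonsing_inv _ hQdet, mul_one]
      using congrArg (fun A => M * A * Q⁻¹) (h y hy)
  obtain ⟨c, hc⟩ :=
    Matrix.exists_eq_smul_one_of_forall_commute (A := fun n : N => P n) hirr fun n => by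
    show P n * _ = _ * P n
    simpa only [hμ n n.2, hν n n.2, one_smul] using hR n (hNS n.2)
  have hc0 : c ≠ 0 := by
    rintro rfl
    rw [zero_smul] at hc
    exact (hM.mul (Matrix.isUnit_nonsing_inv_iff.2 hQ)).ne_zero hc
  have := hR y hy
  rw [hc, Matrix.mul_smul, Matrix.smul_mul, mul_one, one_mul, smul_smul, smul_smul] at this
  exact mul_right_cancel₀ hc0 (smul_left_injective K (hP.isUnit y hy).ne_zero this)

end IsProjRep

end ProjectiveRep

theorem projectiveRep_mu_decomposition_general
    {G : Type*} [Group G] (N : Subgroup G) (hN : N.Normal)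
    (d : ℕ) (hd : 0 < d) (θ : ↥N → ℂ)
    -- the stabilizer `G_θ` :
    (S : Set G) (hS : S = charStabSet N hN θ)
    -- `P` is a projective representation of `G_θ` with factor set `α`, associated with `θ` :
    (P : G → Matrix (Fin d) (Fin d) ℂ) (α : G → G → ℂ)
    (hPinv : ∀ x ∈ S, IsUnit (P x))
    (hα : ∀ x ∈ S, ∀ y ∈ S, α x y ≠ 0)
    (hfac : ∀ x ∈ S, ∀ y ∈ S, P x * P y = α x y • P (x * y))
    (hres : ∀ n m : ↥N, P ((n : G) * (m : G)) = P (n : G) * P (m : G))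
    (hirr : ∀ W : Submodule ℂ (Fin d → ℂ),
      (∀ n : ↥N, ∀ v ∈ W, (P (n : G)).mulVec v ∈ W) → W = ⊥ ∨ W = ⊤)
    (htr : ∀ n : ↥N, (P (n : G)).trace = θ n)
    (hleft : ∀ (n : ↥N), ∀ y ∈ S, P ((n : G) * y) = P (n : G) * P y)
    (hright : ∀ (n : ↥N), ∀ y ∈ S, P (y * (n : G)) = P y * P (n : G))
    -- `σ` is a ring automorphism of `ℂ`, `g = t * x` with `t ∈ G_θ`, and `θ^{gσ} = θ` :
    (σ : ℂ ≃+* ℂ) (g t x : G) (ht : t ∈ S) (hg : g = t * x)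
    (hgσ : ∀ n : ↥N, σ (θ ⟨g * (n : G) * g⁻¹, hN.conj_mem (n : G) n.2 g⟩) = θ n)
    -- `μ_{gσ}` is the unique function with value `1` at `1`, constant on cosets of `N`,
    -- satisfying `σ(P (g y g⁻¹)) = μ_{gσ}(y) • (M⁻¹ * P y * M)` for some invertible `M` :
    (μgσ : G → ℂ) (hμgσ1 : μgσ 1 = 1)
    (hμgσcoset : ∀ (n : ↥N), ∀ y ∈ S, μgσ ((n : G) * y) = μgσ y)
    (hμgσ : ∃ M : Matrix (Fin d) (Fin d) ℂ, IsUnit M ∧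
      ∀ y ∈ S, (P (g * y * g⁻¹)).map ⇑σ = μgσ y • (M⁻¹ * P y * M))
    -- `μ_{xσ}` is the analogous function for `x` :
    (μxσ : G → ℂ) (hμxσ1 : μxσ 1 = 1)
    (hμxσcoset : ∀ (n : ↥N), ∀ y ∈ S, μxσ ((n : G) * y) = μxσ y)
    (hμxσ : ∃ M' : Matrix (Fin d) (Fin d) ℂ, IsUnit M' ∧
      ∀ y ∈ S, (P (x * y * x⁻¹)).map ⇑σ = μxσ y • (M'⁻¹ * P y * M')) :
    -- `θ^{xσ} = θ` :
    (∀ n : ↥N, σ (θ ⟨x * (n : G) * x⁻¹, hN.conj_mem (n : G) n.2 x⟩) = θ n) ∧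
    -- conjugation by `x` maps `G_θ` onto itself :
    (∀ y : G, y ∈ S ↔ x * y * x⁻¹ ∈ S) ∧
    -- `μ_{gσ}(y) = σ(μ_t(x y x⁻¹)) * μ_{xσ}(y)` where
    -- `μ_t(z) = α(t,t⁻¹) * α(t, z t⁻¹)⁻¹ * α(z, t⁻¹)⁻¹` :
    (∀ y ∈ S,
      μgσ y =
        σ (α t t⁻¹ * (α t (x * y * x⁻¹ * t⁻¹))⁻¹ * (α (x * y * x⁻¹) t⁻¹)⁻¹) * μxσ y) := by
  subst hS hg
  have : Nonempty (Fin d) := ⟨⟨0, hd⟩⟩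
  have hP : IsProjRep (charStab hN θ) P α := ⟨hPinv, hα, hfac⟩
  have hP1 : P 1 = 1 :=
    (IsIdempotentElem.iff_eq_one_of_isUnit (hPinv 1 (charStab hN θ).one_mem)).1
      (by simpa [IsIdempotentElem] using (hres 1 1).symm)
  let ρ : N →* Matrix (Fin d) (Fin d) ℂ :=
    { toFun := fun n => P n, map_one' := hP1, map_mul' := hres }
  have hNS : N ≤ charStab hN θ :=
    le_charStab hN fun n m => by rw [← htr, ← htr]; exact ρ.trace_map_conj n m
  have hθx : ⇑σ ∘ charConj hN x θ = θ := by
    rw [← charConj_mul_left_of_mem hN ht]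
    exact funext hgσ
  have hconj := conj_mem_charStab_iff hN σ.injective hθx
  refine ⟨congrFun hθx, fun y => (hconj y).symm, fun y hy => ?_⟩
  obtain ⟨M, hM, hMeq⟩ := hμgσ
  obtain ⟨M', hM', hM'eq⟩ := hμxσ
  have hT : IsUnit ((P t).map σ) := (hPinv t ht).map σ.mapMatrix
  refine hP.eq_of_smul_conj_eq hNS hirr (ν := fun y => σ (conjFactor α t (x * y * x⁻¹)) * μxσ y)
    ?_ ?_ hM (hM'.mul (Matrix.isUnit_nonsing_inv_iff.2 hT)) (fun y hy => ?_) hy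
  · intro n hn
    simpa [hμgσ1] using hμgσcoset ⟨n, hn⟩ 1 (charStab hN θ).one_mem
  · intro n hn
    rw [hP.conjFactor_eq_one_of_mem hN hNS hleft hright ht (hN.conj_mem n hn x), map_one, one_mul]
    simpa [hμxσ1] using hμxσcoset ⟨n, hn⟩ 1 (charStab hN θ).one_mem
  · rw [← hMeq y hy, show t * x * y * (t * x)⁻¹ = t * (x * y * x⁻¹) * t⁻¹ by group]
    exact hP.map_conj_eq_smul_conj hP1 σ ht ((hconj y).2 hy) (hM'eq y hy)

/-- Lemma 1.5(b) of the paper.  Let `N ⊴ G`, `θ` an irreducible complex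
character of `N` with stabilizer `G_θ`, `P` a projective representation of `G_θ` associated
with `θ` with factor set `α`.  Let `σ` be a ring automorphism of `ℂ` and `g ∈ G` with
`θ^{gσ} = θ`, and write `g = t * x` with `t ∈ G_θ`.  Then `θ^{xσ} = θ`, conjugation by `x`
maps `G_θ` onto itself, and `μ_{gσ}(y) = σ(μ_t(x y x⁻¹)) * μ_{xσ}(y)` for all `y ∈ G_θ`,
where `μ_t(z) = α(t,t⁻¹) * α(t, z t⁻¹)⁻¹ * α(z, t⁻¹)⁻¹`. -/
theorem projectiveRep_mu_decomposition
    {G : Type*} [Group G] [Finite G] (N : Subgroup G) (hN : N.Normal)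
    (d : ℕ) (hd : 0 < d) (θ : ↥N → ℂ)
    -- the stabilizer `G_θ` :
    (S : Set G) (hS : S = charStabSet N hN θ)
    -- `P` is a projective representation of `G_θ` with factor set `α`, associated with `θ` :
    (P : G → Matrix (Fin d) (Fin d) ℂ) (α : G → G → ℂ)
    (hPinv : ∀ x ∈ S, IsUnit (P x))
    (hα : ∀ x ∈ S, ∀ y ∈ S, α x y ≠ 0)
    (hfac : ∀ x ∈ S, ∀ y ∈ S, P x * P y = α x y • P (x * y))
    (hres : ∀ n m : ↥N, P ((n : G) * (m : G)) = P (n : G) * P (m : G))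
    (hirr : ∀ W : Submodule ℂ (Fin d → ℂ),
      (∀ n : ↥N, ∀ v ∈ W, (P (n : G)).mulVec v ∈ W) → W = ⊥ ∨ W = ⊤)
    (htr : ∀ n : ↥N, (P (n : G)).trace = θ n)
    (hleft : ∀ (n : ↥N), ∀ y ∈ S, P ((n : G) * y) = P (n : G) * P y)
    (hright : ∀ (n : ↥N), ∀ y ∈ S, P (y * (n : G)) = P y * P (n : G))
    -- `σ` is a ring automorphism of `ℂ`, `g = t * x` with `t ∈ G_θ`, and `θ^{gσ} = θ` :
    (σ : ℂ ≃+* ℂ) (g t x : G) (ht : t ∈ S) (hg : g = t * x)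
    (hgσ : ∀ n : ↥N, σ (θ ⟨g * (n : G) * g⁻¹, hN.conj_mem (n : G) n.2 g⟩) = θ n)
    -- `μ_{gσ}` is the unique function with value `1` at `1`, constant on cosets of `N`,
    -- satisfying `σ(P (g y g⁻¹)) = μ_{gσ}(y) • (M⁻¹ * P y * M)` for some invertible `M` :
    (μgσ : G → ℂ) (hμgσ1 : μgσ 1 = 1)
    (hμgσcoset : ∀ (n : ↥N), ∀ y ∈ S, μgσ ((n : G) * y) = μgσ y)
    (hμgσ : ∃ M : Matrix (Fin d) (Fin d) ℂ, IsUnit M ∧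
      ∀ y ∈ S, (P (g * y * g⁻¹)).map ⇑σ = μgσ y • (M⁻¹ * P y * M))
    -- `μ_{xσ}` is the analogous function for `x` :
    (μxσ : G → ℂ) (hμxσ1 : μxσ 1 = 1)
    (hμxσcoset : ∀ (n : ↥N), ∀ y ∈ S, μxσ ((n : G) * y) = μxσ y)
    (hμxσ : ∃ M' : Matrix (Fin d) (Fin d) ℂ, IsUnit M' ∧
      ∀ y ∈ S, (P (x * y * x⁻¹)).map ⇑σ = μxσ y • (M'⁻¹ * P y * M')) :
    -- `θ^{xσ} = θ` :
    (∀ n : ↥N, σ (θ ⟨x * (n : G) * x⁻¹, hN.conj_mem (n : G) n.2 x⟩) = θ n) ∧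
    -- conjugation by `x` maps `G_θ` onto itself :
    (∀ y : G, y ∈ S ↔ x * y * x⁻¹ ∈ S) ∧
    -- `μ_{gσ}(y) = σ(μ_t(x y x⁻¹)) * μ_{xσ}(y)` where
    -- `μ_t(z) = α(t,t⁻¹) * α(t, z t⁻¹)⁻¹ * α(z, t⁻¹)⁻¹` :
    (∀ y ∈ S,
      μgσ y =
        σ (α t t⁻¹ * (α t (x * y * x⁻¹ * t⁻¹))⁻¹ * (α (x * y * x⁻¹) t⁻¹)⁻¹) * μxσ y) :=
  projectiveRep_mu_decomposition_general N hN d hd θ S hS P α hPinv hα hfac hres hirr htr hleft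
    hright σ g t x ht hg hgσ μgσ hμgσ1 hμgσcoset hμgσ μxσ hμxσ1 hμxσcoset hμxσ
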